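/- arXiv:math/0701874 — 3 statements merged into one kernel-verified Lean document; each statement's English description precedes it below -/
import Mathlib

section
/- Let R = ℚ[a0, a1, b0] and J⁻ the ideal generated by 3·b0² + 6·a1·b0 − a0·b0, 2·a1·b0 − a1·a0, 12·a1² + a1·a0, a0²·b0, and 3·a0³ + 32·a1·a0². Then the quotient ring R/J⁻ is a finite-dimensional ℚ-vector space. -/
open MvPolynomial

noncomputable def a0 : MvPolynomial (Fin 3) ℚ := X 0
noncomputable def a1 : MvPolynomial (Fin 3) ℚ := X 1
noncomputable def b0 : MvPolynomial (Fin 3) ℚ := X 2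

noncomputable def Jminus : Ideal (MvPolynomial (Fin 3) ℚ) :=
  Ideal.span {3 * b0 ^ 2 + 6 * a1 * b0 - a0 * b0, 2 * a1 * b0 - a1 * a0,
    12 * a1 ^ 2 + a1 * a0, a0 ^ 2 * b0, 3 * a0 ^ 3 + 32 * a1 * a0 ^ 2}

lemma g1_mem : 3 * b0 ^ 2 + 6 * a1 * b0 - a0 * b0 ∈ Jminus :=
  Ideal.subset_span (Set.mem_insert _ _)

lemma g2_mem : 2 * a1 * b0 - a1 * a0 ∈ Jminus :=
  Ideal.subset_span (Set.mem_insert_of_mem _ (Set.mem_insert _ _))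

lemma g3_mem : 12 * a1 ^ 2 + a1 * a0 ∈ Jminus :=
  Ideal.subset_span (Set.mem_insert_of_mem _ (Set.mem_insert_of_mem _ (Set.mem_insert _ _)))

lemma g4_mem : a0 ^ 2 * b0 ∈ Jminus :=
  Ideal.subset_span (Set.mem_insert_of_mem _ (Set.mem_insert_of_mem _
    (Set.mem_insert_of_mem _ (Set.mem_insert _ _))))

lemma g5_mem : 3 * a0 ^ 3 + 32 * a1 * a0 ^ 2 ∈ Jminus :=
  Ideal.subset_span (Set.mem_insert_of_mem _ (Set.mem_insert_of_mem _
    (Set.mem_insert_of_mem _ (Set.mem_insert_of_mem _ rfl))))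

lemma mem_of_nat_mul {p : MvPolynomial (Fin 3) ℚ} (n : ℕ) (hn : (n : ℚ) ≠ 0)
    (h : (n : MvPolynomial (Fin 3) ℚ) * p ∈ Jminus) : p ∈ Jminus := by
  have hp : p = C ((n : ℚ)⁻¹) * ((n : MvPolynomial (Fin 3) ℚ) * p) := by
    rw [show ((n : MvPolynomial (Fin 3) ℚ)) = C ((n : ℚ)) from (map_natCast C n).symm,
      ← mul_assoc, ← C_mul, inv_mul_cancel₀ hn, C_1, one_mul]
  rw [hp]
  exact Ideal.mul_mem_left _ _ h

lemma a0_pow_mem : a0 ^ 4 ∈ Jminus := by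
  apply mem_of_nat_mul 3 (by norm_num)
  have h : ((3 : ℕ) : MvPolynomial (Fin 3) ℚ) * a0 ^ 4 =
      a0 * (3 * a0 ^ 3 + 32 * a1 * a0 ^ 2)
      + 32 * a0 ^ 2 * (2 * a1 * b0 - a1 * a0)
      - 64 * a1 * (a0 ^ 2 * b0) := by
    push_cast
    ring
  rw [h]
  exact Ideal.sub_mem _ (Ideal.add_mem _ (Ideal.mul_mem_left _ _ g5_mem)
    (Ideal.mul_mem_left _ _ g2_mem)) (Ideal.mul_mem_left _ _ g4_mem)

lemma a1_pow_mem : a1 ^ 4 ∈ Jminus := by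
  apply mem_of_nat_mul 1728 (by norm_num)
  have h : ((1728 : ℕ) : MvPolynomial (Fin 3) ℚ) * a1 ^ 4 =
      (144 * a1 ^ 2 - 12 * a0 * a1 + a0 ^ 2) * (12 * a1 ^ 2 + a1 * a0)
      - 2 * a1 * (a0 ^ 2 * b0)
      + a0 ^ 2 * (2 * a1 * b0 - a1 * a0) := by
    push_cast
    ring
  rw [h]
  exact Ideal.add_mem _ (Ideal.sub_mem _ (Ideal.mul_mem_left _ _ g3_mem)
    (Ideal.mul_mem_left _ _ g4_mem)) (Ideal.mul_mem_left _ _ g2_mem)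

lemma b0_pow_mem : b0 ^ 4 ∈ Jminus := by
  apply mem_of_nat_mul 18 (by norm_num)
  have h : ((18 : ℕ) : MvPolynomial (Fin 3) ℚ) * b0 ^ 4 =
      (6 * b0 ^ 2 + 2 * a0 * b0) * (3 * b0 ^ 2 + 6 * a1 * b0 - a0 * b0)
      - (18 * b0 ^ 2 + 15 * a0 * b0) * (2 * a1 * b0 - a1 * a0)
      + (2 * b0 - 15 * a1) * (a0 ^ 2 * b0) := by
    push_cast
    ring
  rw [h]
  exact Ideal.add_mem _ (Ideal.sub_mem _ (Ideal.mul_mem_left _ _ g1_mem)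
    (Ideal.mul_mem_left _ _ g2_mem)) (Ideal.mul_mem_left _ _ g4_mem)

lemma X_pow_mem (i : Fin 3) : (X i : MvPolynomial (Fin 3) ℚ) ^ 4 ∈ Jminus := by
  fin_cases i
  · exact a0_pow_mem
  · exact a1_pow_mem
  · exact b0_pow_mem

theorem stmt2 : FiniteDimensional ℚ (MvPolynomial (Fin 3) ℚ ⧸ Jminus) := by
  set f := Ideal.Quotient.mkₐ ℚ Jminus with hf
  have hadj : Algebra.adjoin ℚ (f '' Set.range X) = ⊤ := by
    rw [← AlgHom.map_adjoin, MvPolynomial.adjoin_range_X, Algebra.map_top,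
      AlgHom.range_eq_top]
    exact Ideal.Quotient.mkₐ_surjective ℚ Jminus
  have hint : ∀ x ∈ f '' Set.range X, IsIntegral ℚ x := by
    rintro x ⟨p, ⟨i, rfl⟩, rfl⟩
    refine ⟨Polynomial.X ^ 4, Polynomial.monic_X_pow 4, ?_⟩
    have h0 : f (X i) ^ 4 = 0 := by
      rw [← map_pow]
      exact (Ideal.Quotient.eq_zero_iff_mem).2 (X_pow_mem i)
    rw [Polynomial.eval₂_X_pow]
    exact h0
  have hfg : (Algebra.adjoin ℚ (f '' Set.range X)).toSubmodule.FG :=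
    fg_adjoin_of_finite ((Set.finite_range X).image f) hint
  refine ⟨?_⟩
  rw [← Algebra.top_toSubmodule, ← hadj]
  exact hfg
end

section
/- Let J⁻ ⊆ ℚ[a0, a1, b0] be generated by 3·b0² + 6·a1·b0 − a0·b0, 2·a1·b0 − a1·a0, 12·a1² + a1·a0, a0²·b0, 3·a0³ + 32·a1·a0². Set λ = (1/10)·(a0 + 2·b0 + 4·a1). Then λ²·a0 = 0 and λ²·b0 = 0 in ℚ[a0,a1,b0]/J⁻. -/
open MvPolynomial

noncomputable def lam : MvPolynomial (Fin 3) ℚ :=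
  C (1 / 10 : ℚ) * (a0 + 2 * b0 + 4 * a1)

lemma hmem_a0 : (9 : MvPolynomial (Fin 3) ℚ) * (a0 + 2 * b0 + 4 * a1) ^ 2 * a0 ∈ Jminus := by
  have h : (9 : MvPolynomial (Fin 3) ℚ) * (a0 + 2 * b0 + 4 * a1) ^ 2 * a0 =
      (12 * a0 - 24 * a1) * (3 * b0 ^ 2 + 6 * a1 * b0 - a0 * b0) +
      (24 * a0 - 144 * a1 + 36 * b0) * (2 * a1 * b0 - a1 * a0) +
      (36 * b0) * (12 * a1 ^ 2 + a1 * a0) +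
      48 * (a0 ^ 2 * b0) +
      3 * (3 * a0 ^ 3 + 32 * a1 * a0 ^ 2) := by
    simp only [a0, a1, b0]; ring
  rw [h]
  exact add_mem (add_mem (add_mem (add_mem
    (Ideal.mul_mem_left _ _ g1_mem) (Ideal.mul_mem_left _ _ g2_mem))
    (Ideal.mul_mem_left _ _ g3_mem)) (Ideal.mul_mem_left _ _ g4_mem))
    (Ideal.mul_mem_left _ _ g5_mem)

lemma hmem_b0 : (9 : MvPolynomial (Fin 3) ℚ) * (a0 + 2 * b0 + 4 * a1) ^ 2 * b0 ∈ Jminus := by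
  have h : (9 : MvPolynomial (Fin 3) ℚ) * (a0 + 2 * b0 + 4 * a1) ^ 2 * b0 =
      (16 * a0 + 24 * a1 + 12 * b0) * (3 * b0 ^ 2 + 6 * a1 * b0 - a0 * b0) +
      25 * (a0 ^ 2 * b0) := by
    simp only [a0, a1, b0]; ring
  rw [h]
  exact add_mem (Ideal.mul_mem_left _ _ g1_mem) (Ideal.mul_mem_left _ _ g4_mem)

lemma hc : (C (1 / 10 : ℚ) : MvPolynomial (Fin 3) ℚ) ^ 2 = C (1 / 900 : ℚ) * C (9 : ℚ) := by
  rw [← map_pow, ← map_mul]; norm_num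

lemma h9 : (9 : MvPolynomial (Fin 3) ℚ) = C (9 : ℚ) := (map_ofNat C 9).symm

theorem stmt7 :
    Ideal.Quotient.mk Jminus (lam ^ 2 * a0) = 0 ∧
    Ideal.Quotient.mk Jminus (lam ^ 2 * b0) = 0 := by
  constructor
  · have key : lam ^ 2 * a0 =
        C (1 / 900 : ℚ) * ((9 : MvPolynomial (Fin 3) ℚ) * (a0 + 2 * b0 + 4 * a1) ^ 2 * a0) := by
      simp only [lam, h9]
      linear_combination ((a0 + 2 * b0 + 4 * a1) ^ 2 * a0) * hc
    rw [key, Ideal.Quotient.eq_zero_iff_mem]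
    exact Ideal.mul_mem_left _ _ hmem_a0
  · have key : lam ^ 2 * b0 =
        C (1 / 900 : ℚ) * ((9 : MvPolynomial (Fin 3) ℚ) * (a0 + 2 * b0 + 4 * a1) ^ 2 * b0) := by
      simp only [lam, h9]
      linear_combination ((a0 + 2 * b0 + 4 * a1) ^ 2 * b0) * hc
    rw [key, Ideal.Quotient.eq_zero_iff_mem]
    exact Ideal.mul_mem_left _ _ hmem_b0
end

section
/- Let R = ℚ[a0, a1, b0]/J⁻ with J⁻ as in Theorem coho3n. Then the degree-3 graded piece of R is one-dimensional, spanned by the class of a1·a0², and a0³ = −(32/3)·a1·a0² in R. -/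
open MvPolynomial

noncomputable def gradedPiece (d : ℕ) :
    Submodule ℚ (MvPolynomial (Fin 3) ℚ ⧸ Jminus) :=
  (MvPolynomial.homogeneousSubmodule (Fin 3) ℚ d).map
    (Ideal.Quotient.mkₐ ℚ Jminus).toLinearMap

/-!
Write `x, y, z` for the classes of `a0, a1, b0`. Multiplying the relations by suitable forms
rewrites `144` times each of the ten cubic monomials as an integer multiple of `x²y`, so the
degree-3 piece is spanned by `x²y`; the cubic generator `3x³ + 32x²y` gives the stated value of
`x³`. To see `x²y ∉ J⁻`, restrict polynomials to the lines through the three common zeros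
`(1,0,0), (3,0,1), (-12,1,-6)` of the quadric generators and take a weighted sum of the cubic
coefficients. On a multiple `c g` of a generator this gives `c(0)` times the weighted sum of the
values of `g` at the three points, and the weights `-2400, 96, 1` make that vanish for both cubic
generators, while `x²y` is sent to `144`.
-/

theorem Ideal.apply_eq_zero_of_mem_span {A M : Type*} [CommSemiring A] [AddCommMonoid M]
    (f : A →+ M) {S : Set A} (hS : ∀ g ∈ S, ∀ c, f (c * g) = 0) {p : A}
    (hp : p ∈ Ideal.span S) : f p = 0 := by
  suffices ∀ c, f (c * p) = 0 by simpa using this 1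
  induction hp using Submodule.span_induction with
  | mem g hg => exact hS g hg
  | zero => simp
  | add p q _ _ hp hq => simp [mul_add, hp, hq]
  | smul r p _ hp => intro c; simpa [← mul_assoc] using hp (c * r)

theorem eq_smul_of_natCast_mul_eq {A : Type*} [Ring A] [Algebra ℚ A] {n : ℕ} (hn : n ≠ 0)
    {e : ℤ} {m s : A} (h : (n : A) * m = e * s) : m = ((e : ℚ) / n) • s := by
  rw [div_eq_inv_mul, mul_smul, Int.cast_smul_eq_zsmul, zsmul_eq_mul, ← h, ← nsmul_eq_mul,
    ← Nat.cast_smul_eq_nsmul ℚ, inv_smul_smul₀ (Nat.cast_ne_zero.mpr hn)]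

namespace MvPolynomial

variable {σ R : Type*} [CommSemiring R]

noncomputable def restrictToLine (v : σ → R) : MvPolynomial σ R →ₐ[R] Polynomial R :=
  aeval fun j => Polynomial.C (v j) * Polynomial.X

theorem coeff_zero_restrictToLine (v : σ → R) (p : MvPolynomial σ R) :
    (restrictToLine v p).coeff 0 = constantCoeff p := by
  induction p using MvPolynomial.induction_on with
  | C a => simp [restrictToLine]
  | add p q hp hq => simp [hp, hq]
  | mul_X p i hp => simp [restrictToLine]

theorem sum_coeff_restrictToLine_mul {ι : Type*} [Fintype ι] (v : ι → σ → R) (w : ι → R)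
    {n : ℕ} {g : MvPolynomial σ R}
    (hg : ∀ i, restrictToLine (v i) g = Polynomial.C (eval (v i) g) * Polynomial.X ^ n)
    (c : MvPolynomial σ R) :
    ∑ i, w i * (restrictToLine (v i) (c * g)).coeff n =
      constantCoeff c * ∑ i, w i * eval (v i) g := by
  simp_rw [map_mul, hg, ← mul_assoc, Polynomial.coeff_mul_X_pow', le_refl, if_true, Nat.sub_self,
    Polynomial.coeff_mul_C, coeff_zero_restrictToLine, Finset.mul_sum, mul_left_comm]

end MvPolynomial

theorem exists_mul_cubic_monomial_eq_of_relations {A : Type*} [CommRing A] {x y z : A}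
    (h₁ : 3 * z ^ 2 + 6 * y * z - x * z = 0) (h₂ : 2 * y * z - y * x = 0)
    (h₃ : 12 * y ^ 2 + y * x = 0) (h₄ : x ^ 2 * z = 0) (h₅ : 3 * x ^ 3 + 32 * y * x ^ 2 = 0)
    {i j k : ℕ} (h : i + j + k = 3) :
    ∃ e : ℤ, 144 * (x ^ i * y ^ j * z ^ k) = e * (y * x ^ 2) := by
  have hi : i ≤ 3 := by omega
  have hj : j ≤ 3 - i := by omega
  obtain rfl : k = 3 - i - j := by omega
  interval_cases i <;> interval_cases j
  · exact ⟨-120, by linear_combination (48 * z + 16 * x) * h₁ - (144 * z + 120 * x) * h₂ + 16 * h₄⟩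
  · exact ⟨36, by linear_combination (72 * z + 36 * x) * h₂⟩
  · exact ⟨-6, by linear_combination 72 * y * h₂ + 6 * x * h₃⟩
  · exact ⟨1, by linear_combination (12 * y - x) * h₃⟩
  · exact ⟨-144, by linear_combination 48 * x * h₁ - 144 * x * h₂ + 48 * h₄⟩
  · exact ⟨72, by linear_combination 72 * x * h₂⟩
  · exact ⟨-12, by linear_combination 12 * x * h₃⟩
  · exact ⟨0, by linear_combination 144 * h₄⟩
  · exact ⟨144, by linear_combination⟩
  · exact ⟨-1536, by linear_combination 48 * h₅⟩

noncomputable def apolarPoints : Fin 3 → Fin 3 → ℚ := ![![1, 0, 0], ![3, 0, 1], ![-12, 1, -6]]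

noncomputable def apolarWeights : Fin 3 → ℚ := ![-2400, 96, 1]

noncomputable def apolarFunctional : MvPolynomial (Fin 3) ℚ →ₗ[ℚ] ℚ :=
  ∑ i, apolarWeights i • (Polynomial.lcoeff ℚ 3).comp (restrictToLine (apolarPoints i)).toLinearMap

theorem apolarFunctional_apply (p : MvPolynomial (Fin 3) ℚ) :
    apolarFunctional p = ∑ i, apolarWeights i * (restrictToLine (apolarPoints i) p).coeff 3 := by
  simp [apolarFunctional]

theorem apolarFunctional_eq_zero_of_mem {p : MvPolynomial (Fin 3) ℚ} (hp : p ∈ Jminus) :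
    apolarFunctional p = 0 := by
  refine Ideal.apply_eq_zero_of_mem_span apolarFunctional.toAddMonoidHom ?_ hp
  rintro g (rfl | rfl | rfl | rfl | rfl) c <;>
    rw [LinearMap.toAddMonoidHom_coe, apolarFunctional_apply, sum_coeff_restrictToLine_mul _ _
      (fun i => by
        fin_cases i <;>
          simp [restrictToLine, apolarPoints, a0, a1, b0, Polynomial.C_neg, Polynomial.C_ofNat] <;>
          ring)] <;>
    simp [Fin.sum_univ_three, apolarPoints, apolarWeights, a0, a1, b0] <;> norm_num

theorem apolarFunctional_a1_mul_a0_sq : apolarFunctional (a1 * a0 ^ 2) = 144 := by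
  rw [← one_mul (a1 * a0 ^ 2), apolarFunctional_apply, sum_coeff_restrictToLine_mul _ _
    (fun i => by
      fin_cases i <;> simp [restrictToLine, apolarPoints, a0, a1, Polynomial.C_neg, Polynomial.C_ofNat]
      ring)]
  simp [Fin.sum_univ_three, apolarPoints, apolarWeights, a0, a1]
  norm_num

local notation "π" => Ideal.Quotient.mk Jminus

theorem mk_relations :
    3 * π b0 ^ 2 + 6 * π a1 * π b0 - π a0 * π b0 = 0 ∧ 2 * π a1 * π b0 - π a1 * π a0 = 0 ∧
      12 * π a1 ^ 2 + π a1 * π a0 = 0 ∧ π a0 ^ 2 * π b0 = 0 ∧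
      3 * π a0 ^ 3 + 32 * π a1 * π a0 ^ 2 = 0 := by
  simp only [← map_ofNat π, ← map_pow, ← map_mul, ← map_add, ← map_sub,
    Ideal.Quotient.eq_zero_iff_mem]
  refine ⟨?_, ?_, ?_, ?_, ?_⟩ <;> exact Ideal.subset_span (by simp)

theorem mk_a1_mul_a0_sq_ne_zero : π (a1 * a0 ^ 2) ≠ 0 := by
  intro h
  have h144 := apolarFunctional_eq_zero_of_mem (Ideal.Quotient.eq_zero_iff_mem.mp h)
  rw [apolarFunctional_a1_mul_a0_sq] at h144
  norm_num at h144

theorem a1_mul_a0_sq_mem_gradedPiece : π (a1 * a0 ^ 2) ∈ gradedPiece 3 :=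
  ⟨a1 * a0 ^ 2, (isHomogeneous_X ℚ 1).mul ((isHomogeneous_X ℚ 0).pow 2), rfl⟩

theorem gradedPiece_three_le_span : gradedPiece 3 ≤ ℚ ∙ π (a1 * a0 ^ 2) := by
  obtain ⟨h₁, h₂, h₃, h₄, h₅⟩ := mk_relations
  rintro _ ⟨p, hp, rfl⟩
  rw [SetLike.mem_coe, mem_homogeneousSubmodule] at hp
  rw [map_mul, map_pow]
  induction hp using IsWeightedHomogeneous.induction_on with
  | zero => simp
  | add p q _ _ hp hq => simpa using add_mem hp hq
  | monomial d r hd =>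
    have hdeg : d 0 + d 1 + d 2 = 3 := by
      simpa [Finsupp.weight_apply, Finsupp.sum_fintype, Fin.sum_univ_three] using hd
    obtain ⟨e, he⟩ := exists_mul_cubic_monomial_eq_of_relations h₁ h₂ h₃ h₄ h₅ hdeg
    have hmono : π (monomial d 1) = π a0 ^ d 0 * π a1 ^ d 1 * π b0 ^ d 2 := by
      simp [monomial_eq, Finsupp.prod_fintype, Fin.prod_univ_three, a0, a1, b0, mul_assoc]
    have hr : monomial d r = r • monomial d (1 : ℚ) := by rw [smul_monomial, smul_eq_mul, mul_one]
    rw [AlgHom.toLinearMap_apply, hr, map_smul, Ideal.Quotient.mkₐ_eq_mk, hmono]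
    exact Submodule.smul_mem _ _ <| Submodule.mem_span_singleton.mpr
      ⟨_, (eq_smul_of_natCast_mul_eq (n := 144) (by norm_num) (by exact_mod_cast he)).symm⟩

theorem stmt16 :
    Module.finrank ℚ (gradedPiece 3) = 1 ∧
    gradedPiece 3 = Submodule.span ℚ {Ideal.Quotient.mk Jminus (a1 * a0 ^ 2)} ∧
    Ideal.Quotient.mk Jminus (a0 ^ 3) =
      -(32 / 3 : ℚ) • Ideal.Quotient.mk Jminus (a1 * a0 ^ 2) := by
  obtain ⟨-, -, -, -, h₅⟩ := mk_relations
  have hspan : gradedPiece 3 = ℚ ∙ π (a1 * a0 ^ 2) :=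
    le_antisymm gradedPiece_three_le_span
      (Submodule.span_le.mpr (Set.singleton_subset_iff.mpr a1_mul_a0_sq_mem_gradedPiece))
  refine ⟨?_, hspan, ?_⟩
  · rw [hspan]
    exact finrank_span_singleton mk_a1_mul_a0_sq_ne_zero
  · rw [map_pow, map_mul, map_pow, eq_smul_of_natCast_mul_eq (n := 3) (e := -32)
      (m := π a0 ^ 3) (s := π a1 * π a0 ^ 2) (by norm_num) (by push_cast; linear_combination h₅)]
    norm_num
end
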